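/- For the complete graph K_n with n ≥ 2, the τ-index equals the average (Σ_{i=0}^{n−2} (i+1)(n−i) + 1)/(n(n−1)/2 + 1); that is, the minimum over all edge-deletion orderings is achieved by a Thue sequence in which the value n−ℓ occurs exactly ℓ+1 times for each ℓ = 0, 1, …, n−2, followed by a final value 1. -/

import Mathlib

open SimpleGraph Function

/-- A Thue colouring of a simple graph `G`: a proper vertex colouring such that the
colour sequence along any path (here: the support of a path-walk) is non-repetitive,
i.e. it is never a square `l ++ l` with `l` nonempty. -/
def IsThueColoring {V α : Type*} (G : SimpleGraph V) (φ : V → α) : Prop :=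
  (∀ ⦃a b : V⦄, G.Adj a b → φ a ≠ φ b) ∧
  ∀ ⦃a b : V⦄ (p : G.Walk a b), p.IsPath →
    ∀ l : List α, l ≠ [] → p.support.map φ ≠ l ++ l

/-- The Thue chromatic number `π(G)`: the least number of colours admitting a Thue
colouring of `G`. -/
noncomputable def thueNumber {V : Type*} (G : SimpleGraph V) : ℕ :=
  sInf {k | ∃ φ : V → Fin k, IsThueColoring G φ}
/-- `l` is an ordering (a listing without repetition) of the edges of `G`. -/
def IsEdgeOrdering {V : Type*} (G : SimpleGraph V) (l : List (Sym2 V)) : Prop :=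
  l.Nodup ∧ ∀ e, e ∈ l ↔ e ∈ G.edgeSet

/-- The τ-value of an edge ordering: the average `(1/(ε+1)) Σ_{i=0}^{ε} π(G*ᵢ)` of the
Thue numbers of the graphs obtained by successively deleting the edges in order. -/
noncomputable def tauValue {V : Type*} (G : SimpleGraph V) (l : List (Sym2 V)) : ℝ :=
  (∑ i ∈ Finset.range (l.length + 1),
    (thueNumber (G.deleteEdges {e | e ∈ l.take i}) : ℝ)) / (l.length + 1)

/-- The τ-index of a graph: the minimum τ-value over all orderings of its edges. -/
noncomputable def tauIndex {V : Type*} (G : SimpleGraph V) : ℝ :=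
  sInf {x | ∃ l : List (Sym2 V), IsEdgeOrdering G l ∧ tauValue G l = x}

/-!
A Thue colouring `φ` of `G` with `k` colours admits no path `x - y - x' - y'` with
`φ x = φ x'` and `φ y = φ y'`, so the edges between two colour classes of sizes `a` and `b` form
a star forest and number at most `a + b - 1`. Summing over pairs of colour classes, a graph on
`n` vertices with Thue number `k` misses at least `(n - k + 1).choose 2` edges. Hence after
deleting fewer than `(v + 1).choose 2` edges from `K_n` the Thue number is still at least
`n + 1 - v`, whatever the order of deletion.

Conversely, delete the edges of `K_n` so that the edges among the last `v` vertices of an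
enumeration are gone after `v.choose 2` steps. These vertices are then independent; giving them
one common colour and every other vertex its own colour is a Thue colouring with `n + 1 - v`
colours. This order therefore attains the lower bound at every step, so it minimises the
τ-value, and its Thue sequence takes the value `n + 1 - v` exactly `v` times.
-/

open Finset

theorem Nat.succ_choose_two (m : ℕ) : (m + 1).choose 2 = m.choose 2 + m := by
  simp [Nat.choose_succ_succ', add_comm]

theorem Nat.exists_le_choose_two_le_lt {n i : ℕ} (hn : 0 < n) (hi : i ≤ n.choose 2) :
    ∃ v ≤ n, v.choose 2 ≤ i ∧ i < (v + 1).choose 2 := by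
  induction i with
  | zero => exact ⟨1, hn, by simp⟩
  | succ i ih =>
    obtain ⟨v, hvn, hvi, hiv⟩ := ih (by omega)
    by_cases h : i + 1 < (v + 1).choose 2
    · exact ⟨v, hvn, by omega, h⟩
    · have hvn' : v < n := by
        rcases hvn.lt_or_eq with hvn | rfl
        · exact hvn
        · rw [Nat.succ_choose_two] at h
          omega
      refine ⟨v + 1, hvn', by omega, ?_⟩
      rw [Nat.succ_choose_two (v + 1)]
      omega

theorem Finset.sum_Ico_eq_sum_range_sum_Ico {M : Type*} [AddCommMonoid M] (f : ℕ → M)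
    {g : ℕ → ℕ} (hg : Monotone g) (m : ℕ) :
    ∑ i ∈ Ico (g 0) (g m), f i = ∑ v ∈ range m, ∑ i ∈ Ico (g v) (g (v + 1)), f i := by
  induction m with
  | zero => simp
  | succ m ih =>
    rw [sum_range_succ, ← ih, sum_Ico_consecutive f (hg (Nat.zero_le m)) (hg m.le_succ)]

theorem Finset.card_filter_product_lt_card_add_card {β γ : Type*} [DecidableEq β] [DecidableEq γ]
    {s : Finset β} {t : Finset γ} (r : β → γ → Prop) [∀ x y, Decidable (r x y)]
    (ht : t.Nonempty)
    (hr : ∀ x ∈ s, ∀ x' ∈ s, ∀ y ∈ t, ∀ y' ∈ t, r x y → r x' y → r x' y' → x = x' ∨ y = y') :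
    #{p ∈ s ×ˢ t | r p.1 p.2} < #s + #t := by
  set E := {p ∈ s ×ˢ t | r p.1 p.2}
  have hE : ∀ {p}, p ∈ E ↔ p.1 ∈ s ∧ p.2 ∈ t ∧ r p.1 p.2 := by simp [E, and_assoc]
  -- Being free of paths `x - y - x' - y'`, the relation is a union of stars: send each pair to
  -- its `s`-end if that end is a leaf and to its `t`-end otherwise.
  let f : β × γ → β ⊕ γ := fun p => if #{y ∈ t | r p.1 y} ≤ 1 then .inl p.1 else .inr p.2
  have hmaps : ∀ p ∈ E, f p ∈ s.disjSum t := by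
    intro p hp
    rw [hE] at hp
    unfold f
    split_ifs <;> simp [hp.1, hp.2.1]
  have hinj : Set.InjOn f E := by
    rintro ⟨x, y⟩ hp ⟨x', y'⟩ hp' hf
    simp only [mem_coe, hE] at hp hp'
    unfold f at hf
    split_ifs at hf with hx hx' hx' <;> simp only [Sum.inl.injEq, Sum.inr.injEq] at hf
    · subst hf
      exact Prod.ext rfl
        (card_le_one.1 hx _ (by simp [hp.2.1, hp.2.2]) _ (by simp [hp'.2.1, hp'.2.2]))
    · subst hf
      by_contra hne
      have hxx' : x ≠ x' := fun h => hne (by rw [h])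
      obtain ⟨q, hq, hqy⟩ := exists_mem_ne (not_le.1 hx) y
      rw [mem_filter] at hq
      exact (hr x' hp'.1 x hp.1 y hp.2.1 q hq.1 hp'.2.2 hp.2.2 hq.2).elim hxx'.symm hqy.symm
  have hmiss : ∃ z ∈ s.disjSum t, z ∉ E.image f := by
    by_cases hleaf : ∀ x ∈ s, #{y ∈ t | r x y} ≤ 1
    · obtain ⟨y, hy⟩ := ht
      refine ⟨.inr y, by simpa using hy, ?_⟩
      simp only [mem_image, not_exists, not_and]
      intro p hp
      simp [f, hleaf p.1 (hE.1 hp).1]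
    · push Not at hleaf
      obtain ⟨x, hx, hdeg⟩ := hleaf
      refine ⟨.inl x, by simpa using hx, ?_⟩
      simp only [mem_image, not_exists, not_and]
      intro p _
      unfold f
      split_ifs with h
      · rintro ⟨⟩
        omega
      · simp
  calc #E = #(E.image f) := (card_image_of_injOn hinj).symm
    _ < #(s.disjSum t) := by
      obtain ⟨z, hz, hz'⟩ := hmiss
      exact card_lt_card ((ssubset_iff_of_subset (by simpa [image_subset_iff] using hmaps)).2
        ⟨z, hz, hz'⟩)
    _ = #s + #t := card_disjSum s t

theorem SimpleGraph.card_filter_adj_eq_two_mul_card_edgeFinset {V : Type*} [Fintype V]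
    [DecidableEq V] (H : SimpleGraph V) [DecidableRel H.Adj] :
    #{p : V × V | H.Adj p.1 p.2} = 2 * #H.edgeFinset := by
  rw [← sum_degrees_eq_twice_card_edges, card_eq_sum_card_fiberwise (f := Prod.fst) (t := univ)
    (fun _ _ => mem_univ _)]
  refine sum_congr rfl fun x _ => ?_
  rw [← card_neighborFinset_eq_degree, neighborFinset_eq_filter]
  refine card_nbij' Prod.snd (fun y => (x, y)) ?_ ?_ ?_ ?_ <;> intro p <;> aesop

theorem List.Nodup.length_eq_card {V : Type*} [Fintype V] [DecidableEq V] {l : List V}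
    (hl : l.Nodup) (hmem : ∀ x, x ∈ l) :
    l.length = Fintype.card V := by
  rw [← List.toFinset_card_of_nodup hl, eq_univ_of_forall (s := l.toFinset) (by simpa using hmem),
    card_univ]

section ThueColoring

variable {V α : Type*} {G : SimpleGraph V} {φ : V → α}

theorem IsThueColoring.ne_of_path4 (h : IsThueColoring G φ) {x y z w : V} (hxy : G.Adj x y)
    (hyz : G.Adj y z) (hzw : G.Adj z w) (hxz : x ≠ z) (hyw : y ≠ w) (hcx : φ x = φ z) :
    φ y ≠ φ w := by
  intro hcy
  have hxw : x ≠ w := by rintro rfl; exact h.1 hzw hcx.symm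
  let p : G.Walk x w := .cons hxy (.cons hyz (.cons hzw .nil))
  have hp : p.IsPath := by
    simp [p, Walk.cons_isPath_iff, hxy.ne, hyz.ne, hzw.ne, hxz, hyw, hxw]
  exact h.2 p hp [φ x, φ y] (by simp) (by simp [p, hcx, hcy])

theorem isThueColoring_of_injOn (c₀ : α) (hprop : ∀ ⦃a b : V⦄, G.Adj a b → φ a ≠ φ b)
    (hinj : Set.InjOn φ {x | φ x ≠ c₀}) : IsThueColoring G φ := by
  -- In a square `l ++ l`, positions `i` and `i + l.length` carry distinct vertices of equal
  -- colour, so every colour in `l` is `c₀`; but consecutive vertices have distinct colours.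
  refine ⟨hprop, fun a b p hp l hl hsq => ?_⟩
  have hlen : p.support.length = l.length + l.length := by
    simpa using congrArg List.length hsq
  have hcol : ∀ j (hj : j < p.support.length), φ p.support[j] = (l ++ l)[j]'(by simp; omega) := by
    intro j hj
    have := List.getElem_of_eq hsq (i := j) (by simpa using hj)
    rwa [List.getElem_map] at this
  have hc₀ : ∀ c ∈ l, c = c₀ := by
    intro c hc
    obtain ⟨i, hi, rfl⟩ := List.getElem_of_mem hc
    have h₁ : φ p.support[i] = l[i] := by
      rw [hcol i (by omega), List.getElem_append_left hi]
    have h₂ : φ p.support[i + l.length] = l[i] := by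
      rw [hcol _ (by omega), List.getElem_append_right (by omega)]
      simp
    have hne : p.support[i] ≠ p.support[i + l.length] := by
      rw [Ne, hp.support_nodup.getElem_inj_iff]
      omega
    by_contra hc
    exact hne (hinj (by simpa [h₁] using hc) (by simpa [h₂] using hc) (h₁.trans h₂.symm))
  have hchain : (l ++ l).IsChain (· ≠ ·) :=
    hsq ▸ List.isChain_map φ |>.2 (p.isChain_adj_support.imp hprop)
  obtain ⟨c, t, rfl⟩ := List.exists_cons_of_ne_nil hl
  rcases t with _ | ⟨d, t⟩
  · simp at hchain
  · have hcd : c ≠ d := by simpa using (List.isChain_cons_cons.1 hchain).1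
    exact hcd ((hc₀ c (by simp)).trans (hc₀ d (by simp)).symm)

theorem SimpleGraph.IsIndepSet.exists_isThueColoring [Fintype V] [DecidableEq V] {s : Finset V}
    (hs : G.IsIndepSet s) : ∃ φ : V → Fin (#sᶜ + 1), IsThueColoring G φ := by
  let e := sᶜ.equivFin
  let φ : V → Fin (#sᶜ + 1) := fun x => if hx : x ∈ s then 0 else (e ⟨x, mem_compl.2 hx⟩).succ
  have hφ : ∀ x y, φ x = φ y → x = y ∨ x ∈ s ∧ y ∈ s := by
    intro x y hxy
    by_cases hx : x ∈ s <;> by_cases hy : y ∈ s <;>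
      simp [φ, hx, hy, Fin.succ_ne_zero, (Fin.succ_ne_zero _).symm] at hxy ⊢
    exact hxy
  refine ⟨φ, isThueColoring_of_injOn 0 (fun a b hab hφab => ?_) fun x hx y _ hxy => ?_⟩
  · rcases hφ a b hφab with rfl | ⟨ha, hb⟩
    · exact hab.ne rfl
    · exact hs ha hb hab.ne hab
  · rcases hφ x y hxy with h | ⟨hxs, -⟩
    · exact h
    · exact absurd (by simp [φ, hxs]) hx

end ThueColoring

section ThueNumber

variable {V : Type*} {G : SimpleGraph V}

theorem IsThueColoring.thueNumber_le {k : ℕ} {φ : V → Fin k} (h : IsThueColoring G φ) :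
    thueNumber G ≤ k :=
  Nat.sInf_le ⟨φ, h⟩

theorem SimpleGraph.IsIndepSet.thueNumber_le [Fintype V] [DecidableEq V] {s : Finset V}
    (hs : G.IsIndepSet s) : thueNumber G ≤ #sᶜ + 1 :=
  hs.exists_isThueColoring.elim fun _ hφ => hφ.thueNumber_le

theorem exists_isThueColoring_thueNumber [Finite V] :
    ∃ φ : V → Fin (thueNumber G), IsThueColoring G φ := by
  classical
  have := Fintype.ofFinite V
  have hempty : G.IsIndepSet (∅ : Finset V) := by simp [IsIndepSet]
  obtain ⟨φ, hφ⟩ := hempty.exists_isThueColoring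
  exact Nat.sInf_mem (s := {k | ∃ φ : V → Fin k, IsThueColoring G φ}) ⟨_, φ, hφ⟩

end ThueNumber

section ColorClasses

variable {V α : Type*} [Fintype V] [DecidableEq α]

def colorClass (φ : V → α) (c : α) : Finset V := {x | φ x = c}

@[simp]
theorem mem_colorClass {φ : V → α} {c : α} {x : V} : x ∈ colorClass φ c ↔ φ x = c := by
  simp [colorClass]

variable [DecidableEq V] {G : SimpleGraph V} [DecidableRel G.Adj] {φ : V → α}

theorem IsThueColoring.card_compl_adj_colorClass (h : IsThueColoring G φ) (c : α) :
    #{p ∈ colorClass φ c ×ˢ colorClass φ c | Gᶜ.Adj p.1 p.2} =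
      #(colorClass φ c) * #(colorClass φ c) - #(colorClass φ c) := by
  rw [← offDiag_card]
  congr 1
  ext ⟨x, y⟩
  simp only [mem_filter, mem_product, mem_offDiag, mem_colorClass, compl_adj]
  constructor
  · rintro ⟨⟨hx, hy⟩, hxy, -⟩
    exact ⟨hx, hy, hxy⟩
  · rintro ⟨hx, hy, hxy⟩
    exact ⟨⟨hx, hy⟩, hxy, fun hadj => h.1 hadj (hx.trans hy.symm)⟩

theorem IsThueColoring.mul_le_card_compl_adj_colorClasses (h : IsThueColoring G φ) {c d : α}
    (hcd : c ≠ d) :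
    (#(colorClass φ c) - 1) * (#(colorClass φ d) - 1) ≤
      #{p ∈ colorClass φ c ×ˢ colorClass φ d | Gᶜ.Adj p.1 p.2} := by
  set A := colorClass φ c
  set B := colorClass φ d
  rcases B.eq_empty_or_nonempty with hB | hB
  · simp [hB]
  have hadj : #{p ∈ A ×ˢ B | G.Adj p.1 p.2} < #A + #B := by
    refine card_filter_product_lt_card_add_card _ hB fun x hx x' hx' y hy y' hy' h₁ h₂ h₃ => ?_
    simp only [A, B, mem_colorClass] at hx hx' hy hy'
    by_contra! hne
    exact h.ne_of_path4 h₁ h₂.symm h₃ hne.1 hne.2 (hx.trans hx'.symm) (hy.trans hy'.symm)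
  have hsplit : #{p ∈ A ×ˢ B | Gᶜ.Adj p.1 p.2} + #{p ∈ A ×ˢ B | G.Adj p.1 p.2} = #A * #B := by
    rw [← card_product, ← card_filter_add_card_filter_not (s := A ×ˢ B) (fun p => Gᶜ.Adj p.1 p.2)]
    congr 2
    refine filter_congr fun p hp => ?_
    simp only [A, B, mem_product, mem_colorClass] at hp
    have hne : p.1 ≠ p.2 := fun he => hcd (hp.1.symm.trans (he ▸ hp.2))
    simp [hne]
  rcases Nat.eq_zero_or_pos #A with hA | hA
  · simp [hA]
  · have hB' : 1 ≤ #B := card_pos.2 hB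
    zify [hA, hB'] at hadj hsplit ⊢
    nlinarith

variable [Fintype α]

theorem IsThueColoring.choose_two_le_card_compl_edgeFinset (h : IsThueColoring G φ) :
    (Fintype.card V - Fintype.card α + 1).choose 2 ≤ #Gᶜ.edgeFinset := by
  -- The pairwise bounds below sum to `B * (B + 1)` for `B = ∑ c, b c`, and `B ≥ n - k`.
  set b : α → ℕ := fun c => #(colorClass φ c) - 1
  have hpair : ∀ c d, b c * b d + (if c = d then b c else 0) ≤
      #{p ∈ colorClass φ c ×ˢ colorClass φ d | Gᶜ.Adj p.1 p.2} := by
    intro c d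
    split_ifs with hcd
    · subst hcd
      rw [h.card_compl_adj_colorClass]
      simp only [b]
      generalize #(colorClass φ c) = a
      rcases a with _ | a
      · simp
      · have : (a + 1) * (a + 1) = a * a + a + (a + 1) := by ring
        simp only [Nat.add_sub_cancel]
        omega
    · simpa using h.mul_le_card_compl_adj_colorClasses hcd
  have hfib : #{p : V × V | Gᶜ.Adj p.1 p.2} =
      ∑ c, ∑ d, #{p ∈ colorClass φ c ×ˢ colorClass φ d | Gᶜ.Adj p.1 p.2} := by
    rw [card_eq_sum_card_fiberwise (f := fun p => (φ p.1, φ p.2)) (t := univ)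
      (fun _ _ => mem_univ _), ← univ_product_univ, sum_product]
    refine sum_congr rfl fun c _ => sum_congr rfl fun d _ => ?_
    congr 1
    ext p
    simp [and_comm]
  have hB : Fintype.card V - Fintype.card α ≤ ∑ c, b c := by
    have hcard : Fintype.card V = ∑ c, #(colorClass φ c) :=
      card_eq_sum_card_fiberwise (f := φ) (s := univ) (t := univ) (fun _ _ => mem_univ _)
    have hle : ∑ c, #(colorClass φ c) ≤ ∑ c, (b c + 1) :=
      sum_le_sum fun c _ => by simp only [b]; omega
    rw [sum_add_distrib, sum_const, card_univ, smul_eq_mul, mul_one] at hle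
    omega
  have hchoose : (Fintype.card V - Fintype.card α + 1) * (Fintype.card V - Fintype.card α) =
      (Fintype.card V - Fintype.card α + 1).choose 2 * 2 := by
    simpa using Nat.add_one_mul_choose_eq (Fintype.card V - Fintype.card α) 1
  suffices (Fintype.card V - Fintype.card α + 1) * (Fintype.card V - Fintype.card α) ≤
      2 * #Gᶜ.edgeFinset by omega
  calc (Fintype.card V - Fintype.card α + 1) * (Fintype.card V - Fintype.card α)
      ≤ (∑ c, b c + 1) * ∑ c, b c := Nat.mul_le_mul (by omega) hB
    _ = ∑ c, ∑ d, (b c * b d + if c = d then b c else 0) := by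
      simp only [sum_add_distrib, ← sum_mul_sum, sum_ite_eq, mem_univ, if_true]
      ring
    _ ≤ ∑ c, ∑ d, #{p ∈ colorClass φ c ×ˢ colorClass φ d | Gᶜ.Adj p.1 p.2} :=
      sum_le_sum fun c _ => sum_le_sum fun d _ => hpair c d
    _ = 2 * #Gᶜ.edgeFinset := hfib.symm.trans (Gᶜ.card_filter_adj_eq_two_mul_card_edgeFinset)

end ColorClasses

section ThueSeq

variable {V : Type*}

noncomputable def thueSeq (G : SimpleGraph V) (l : List (Sym2 V)) (i : ℕ) : ℕ :=
  thueNumber (G.deleteEdges {e | e ∈ l.take i})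

theorem tauValue_eq_sum_thueSeq (G : SimpleGraph V) (l : List (Sym2 V)) :
    tauValue G l = ((∑ i ∈ range (l.length + 1), thueSeq G l i : ℕ) : ℝ) / (l.length + 1) := by
  simp [tauValue, thueSeq]

theorem IsEdgeOrdering.length_eq [Fintype V] [DecidableEq V] {G : SimpleGraph V}
    [DecidableRel G.Adj] {l : List (Sym2 V)} (h : IsEdgeOrdering G l) :
    l.length = #G.edgeFinset := by
  rw [← List.toFinset_card_of_nodup h.1]
  congr 1
  ext e
  simp [h.2]

variable [Fintype V] [DecidableEq V]

theorem choose_two_le_card_compl_edgeFinset_thueNumber (G : SimpleGraph V) [DecidableRel G.Adj] :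
    (Fintype.card V - thueNumber G + 1).choose 2 ≤ #Gᶜ.edgeFinset := by
  obtain ⟨φ, hφ⟩ := exists_isThueColoring_thueNumber (G := G)
  simpa using hφ.choose_two_le_card_compl_edgeFinset

theorem card_add_one_sub_le_thueSeq_top (L : List (Sym2 V)) {v i : ℕ}
    (hi : i < (v + 1).choose 2) : Fintype.card V + 1 - v ≤ thueSeq ⊤ L i := by
  classical
  set G := (⊤ : SimpleGraph V).deleteEdges {e | e ∈ L.take i}
  have hcompl : Gᶜ.edgeFinset ⊆ (L.take i).toFinset := by
    intro e he
    induction e using Sym2.ind with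
    | _ x y =>
      simp only [G, mem_edgeFinset, mem_edgeSet, compl_adj, deleteEdges_adj, top_adj] at he
      by_contra hxy
      exact he.2 ⟨he.1, by simpa using hxy⟩
  have hG : (Fintype.card V - thueNumber G + 1).choose 2 ≤ i :=
    calc _ ≤ #Gᶜ.edgeFinset := choose_two_le_card_compl_edgeFinset_thueNumber G
      _ ≤ #(L.take i).toFinset := card_le_card hcompl
      _ ≤ (L.take i).length := List.toFinset_card_le _
      _ ≤ i := List.length_take_le _ _
  have hlt : Fintype.card V - thueNumber G + 1 < v + 1 := by
    by_contra! hle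
    exact absurd (Nat.choose_le_choose 2 hle) (by omega)
  change _ ≤ thueNumber G
  omega

end ThueSeq

section CliqueOrder

variable {V : Type*}

def cliqueOrder : List V → List (Sym2 V)
  | [] => []
  | x :: l => cliqueOrder l ++ l.map (s(·, x))

theorem length_cliqueOrder (l : List V) : (cliqueOrder l).length = l.length.choose 2 := by
  induction l with
  | nil => rfl
  | cons x l ih => simp [cliqueOrder, ih, Nat.succ_choose_two]

theorem cliqueOrder_prefix_append (l₁ l₂ : List V) : cliqueOrder l₂ <+: cliqueOrder (l₁ ++ l₂) := by
  induction l₁ with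
  | nil => exact List.prefix_refl _
  | cons x l₁ ih => exact ih.trans (List.prefix_append _ _)

theorem mk_mem_cliqueOrder {l : List V} (hl : l.Nodup) {x y : V} :
    s(x, y) ∈ cliqueOrder l ↔ x ≠ y ∧ x ∈ l ∧ y ∈ l := by
  induction l with
  | nil => simp [cliqueOrder]
  | cons z l ih =>
    rw [List.nodup_cons] at hl
    simp only [cliqueOrder, List.mem_append, ih hl.2, List.mem_map, Sym2.eq_iff, List.mem_cons]
    grind

theorem nodup_cliqueOrder {l : List V} (hl : l.Nodup) : (cliqueOrder l).Nodup := by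
  induction l with
  | nil => exact List.nodup_nil
  | cons x l ih =>
    rw [List.nodup_cons] at hl
    refine List.nodup_append.2 ⟨ih hl.2, hl.2.map fun u v h => Sym2.congr_left.1 h, ?_⟩
    simp only [List.mem_map]
    rintro _ he _ ⟨u, -, rfl⟩ rfl
    exact hl.1 ((mk_mem_cliqueOrder hl.2).1 he).2.2

theorem isEdgeOrdering_cliqueOrder {l : List V} (hl : l.Nodup) (hmem : ∀ x, x ∈ l) :
    IsEdgeOrdering ⊤ (cliqueOrder l) := by
  refine ⟨nodup_cliqueOrder hl, fun e => ?_⟩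
  induction e using Sym2.ind with
  | _ x y => simp [mk_mem_cliqueOrder hl, hmem]

variable [Fintype V] [DecidableEq V]

theorem thueSeq_cliqueOrder_append_le {l₁ l₂ : List V} (hl : (l₁ ++ l₂).Nodup) {i : ℕ}
    (hi : l₂.length.choose 2 ≤ i) :
    thueSeq ⊤ (cliqueOrder (l₁ ++ l₂)) i ≤ Fintype.card V - l₂.length + 1 := by
  have hl₂ : l₂.Nodup := hl.sublist (List.sublist_append_right _ _)
  have hprefix : cliqueOrder l₂ <+: (cliqueOrder (l₁ ++ l₂)).take i :=
    List.prefix_take_iff.2 ⟨cliqueOrder_prefix_append _ _, by rwa [length_cliqueOrder]⟩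
  have hindep : ((⊤ : SimpleGraph V).deleteEdges
      {e | e ∈ (cliqueOrder (l₁ ++ l₂)).take i}).IsIndepSet l₂.toFinset := by
    intro x hx y hy hxy
    simp only [List.coe_toFinset, Set.mem_ofPred_eq] at hx hy
    simpa using fun _ => hprefix.subset ((mk_mem_cliqueOrder hl₂).2 ⟨hxy, hx, hy⟩)
  simpa [thueSeq, card_compl, List.toFinset_card_of_nodup hl₂] using hindep.thueNumber_le

end CliqueOrder

section Enumeration

variable {V : Type*} [Fintype V] [DecidableEq V] {l : List V}

theorem length_cliqueOrder_eq (hl : l.Nodup) (hmem : ∀ x, x ∈ l) :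
    (cliqueOrder l).length = (Fintype.card V).choose 2 := by
  rw [length_cliqueOrder, hl.length_eq_card hmem]

theorem thueSeq_cliqueOrder (hl : l.Nodup) (hmem : ∀ x, x ∈ l) {v i : ℕ}
    (hv : v ≤ Fintype.card V) (hvi : v.choose 2 ≤ i) (hiv : i < (v + 1).choose 2) :
    thueSeq ⊤ (cliqueOrder l) i = Fintype.card V + 1 - v := by
  refine le_antisymm ?_ (card_add_one_sub_le_thueSeq_top _ hiv)
  have hdrop : (l.drop (Fintype.card V - v)).length = v := by
    rw [List.length_drop, hl.length_eq_card hmem]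
    omega
  have := thueSeq_cliqueOrder_append_le (l₁ := l.take (Fintype.card V - v))
    (by rwa [List.take_append_drop]) (hdrop ▸ hvi)
  rw [List.take_append_drop, hdrop] at this
  omega

variable [Nonempty V]

theorem thueSeq_cliqueOrder_length (hl : l.Nodup) (hmem : ∀ x, x ∈ l) :
    thueSeq ⊤ (cliqueOrder l) (cliqueOrder l).length = 1 := by
  have hn : 0 < Fintype.card V := Fintype.card_pos
  rw [length_cliqueOrder_eq hl hmem, thueSeq_cliqueOrder hl hmem le_rfl le_rfl
    (by rw [Nat.succ_choose_two]; omega)]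
  omega

theorem thueSeq_cliqueOrder_le (hl : l.Nodup) (hmem : ∀ x, x ∈ l) (L : List (Sym2 V)) {i : ℕ}
    (hi : i ≤ (Fintype.card V).choose 2) : thueSeq ⊤ (cliqueOrder l) i ≤ thueSeq ⊤ L i := by
  obtain ⟨v, hv, hvi, hiv⟩ := Nat.exists_le_choose_two_le_lt Fintype.card_pos hi
  rw [thueSeq_cliqueOrder hl hmem hv hvi hiv]
  exact card_add_one_sub_le_thueSeq_top L hiv

theorem tauValue_cliqueOrder_le (hl : l.Nodup) (hmem : ∀ x, x ∈ l) {L : List (Sym2 V)}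
    (hL : IsEdgeOrdering ⊤ L) : tauValue ⊤ (cliqueOrder l) ≤ tauValue ⊤ L := by
  have hlen : L.length = (cliqueOrder l).length := by
    rw [hL.length_eq, (isEdgeOrdering_cliqueOrder hl hmem).length_eq]
  rw [tauValue_eq_sum_thueSeq, tauValue_eq_sum_thueSeq, hlen]
  gcongr with i hi
  rw [mem_range, length_cliqueOrder_eq hl hmem] at hi
  exact thueSeq_cliqueOrder_le hl hmem L (by omega)

theorem tauIndex_top_eq_tauValue_cliqueOrder (hl : l.Nodup) (hmem : ∀ x, x ∈ l) :
    tauIndex (⊤ : SimpleGraph V) = tauValue ⊤ (cliqueOrder l) :=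
  IsLeast.csInf_eq ⟨⟨_, isEdgeOrdering_cliqueOrder hl hmem, rfl⟩,
    by rintro _ ⟨L, hL, rfl⟩; exact tauValue_cliqueOrder_le hl hmem hL⟩

theorem sum_thueSeq_cliqueOrder (hl : l.Nodup) (hmem : ∀ x, x ∈ l) :
    ∑ i ∈ range ((cliqueOrder l).length + 1), thueSeq ⊤ (cliqueOrder l) i =
      ∑ ℓ ∈ range (Fintype.card V - 1), (ℓ + 1) * (Fintype.card V - ℓ) + 1 := by
  set n := Fintype.card V
  have hblock : ∀ v ∈ range n,
      ∑ i ∈ Ico (v.choose 2) ((v + 1).choose 2), thueSeq ⊤ (cliqueOrder l) i = v * (n + 1 - v) := by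
    intro v hv
    rw [sum_congr rfl fun i hi => thueSeq_cliqueOrder hl hmem (mem_range.1 hv).le
      (mem_Ico.1 hi).1 (mem_Ico.1 hi).2, sum_const, Nat.card_Ico, Nat.succ_choose_two, smul_eq_mul]
    congr 1
    omega
  have hblocks := sum_Ico_eq_sum_range_sum_Ico (thueSeq ⊤ (cliqueOrder l)) (g := (·.choose 2))
    (fun _ _ h => Nat.choose_le_choose 2 h) n
  rw [Nat.choose_zero_succ, ← range_eq_Ico, sum_congr rfl hblock] at hblocks
  obtain ⟨m, hm⟩ : ∃ m, n = m + 1 := Nat.exists_eq_succ_of_ne_zero Fintype.card_ne_zero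
  rw [sum_range_succ, thueSeq_cliqueOrder_length hl hmem, length_cliqueOrder_eq hl hmem, hblocks,
    hm, sum_range_succ']
  simp

theorem ncard_thueSeq_cliqueOrder_eq (hl : l.Nodup) (hmem : ∀ x, x ∈ l) {ℓ : ℕ}
    (hℓ : ℓ + 2 ≤ Fintype.card V) :
    {i | i ≤ (cliqueOrder l).length ∧ thueSeq ⊤ (cliqueOrder l) i = Fintype.card V - ℓ}.ncard =
      ℓ + 1 := by
  have hblock : {i | i ≤ (cliqueOrder l).length ∧
      thueSeq ⊤ (cliqueOrder l) i = Fintype.card V - ℓ} =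
        Ico ((ℓ + 1).choose 2) ((ℓ + 2).choose 2) := by
    ext i
    rw [length_cliqueOrder_eq hl hmem, coe_Ico, Set.mem_Ico, Set.mem_ofPred_eq]
    constructor
    · rintro ⟨hi, hπ⟩
      obtain ⟨v, hv, hvi, hiv⟩ := Nat.exists_le_choose_two_le_lt Fintype.card_pos hi
      rw [thueSeq_cliqueOrder hl hmem hv hvi hiv] at hπ
      obtain rfl : v = ℓ + 1 := by omega
      exact ⟨hvi, hiv⟩
    · rintro ⟨hvi, hiv⟩
      refine ⟨(Nat.choose_le_choose 2 hℓ).trans' hiv.le, ?_⟩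
      rw [thueSeq_cliqueOrder hl hmem (by omega) hvi hiv]
      omega
  rw [hblock, Set.ncard_coe_finset, Nat.card_Ico, Nat.succ_choose_two (ℓ + 1)]
  omega

theorem tauValue_cliqueOrder (hl : l.Nodup) (hmem : ∀ x, x ∈ l) :
    tauValue ⊤ (cliqueOrder l) =
      ((∑ ℓ ∈ range (Fintype.card V - 1), ((ℓ : ℝ) + 1) * ((Fintype.card V : ℝ) - ℓ)) + 1) /
        ((Fintype.card V : ℝ) * ((Fintype.card V : ℝ) - 1) / 2 + 1) := by
  rw [tauValue_eq_sum_thueSeq, sum_thueSeq_cliqueOrder hl hmem, length_cliqueOrder_eq hl hmem,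
    Nat.cast_choose_two]
  push_cast
  congr 2
  refine sum_congr rfl fun ℓ hℓ => ?_
  rw [mem_range] at hℓ
  rw [Nat.cast_sub (by omega)]

end Enumeration

/-- the τ-index of the complete graph `K_n`, `n ≥ 2`, equals
`(Σ_{i=0}^{n−2} (i+1)(n−i) + 1) / (n(n−1)/2 + 1)`; moreover the minimum is achieved
by an edge ordering whose Thue sequence takes the value `n − ℓ` exactly `ℓ + 1` times
for each `ℓ = 0, …, n−2`, followed by a final value `1`. -/
theorem tauIndex_completeGraph (n : ℕ) (hn : 2 ≤ n) :
    tauIndex (completeGraph (Fin n)) =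
      ((∑ i ∈ Finset.range (n - 1), ((i : ℝ) + 1) * ((n : ℝ) - i)) + 1) /
        ((n : ℝ) * ((n : ℝ) - 1) / 2 + 1) ∧
    ∃ l : List (Sym2 (Fin n)), IsEdgeOrdering (completeGraph (Fin n)) l ∧
      tauValue (completeGraph (Fin n)) l = tauIndex (completeGraph (Fin n)) ∧
      (∀ ℓ ≤ n - 2, {i : ℕ | i ≤ l.length ∧
          thueNumber ((completeGraph (Fin n)).deleteEdges {e | e ∈ l.take i}) = n - ℓ}.ncard
        = ℓ + 1) ∧
      thueNumber ((completeGraph (Fin n)).deleteEdges {e | e ∈ l.take l.length}) = 1 := by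
  have : Nonempty (Fin n) := ⟨⟨0, by omega⟩⟩
  have hl := List.nodup_finRange n
  have hmem : ∀ x, x ∈ List.finRange n := List.mem_finRange
  have hτ := tauIndex_top_eq_tauValue_cliqueOrder hl hmem
  refine ⟨by simpa [hτ] using tauValue_cliqueOrder hl hmem, cliqueOrder (List.finRange n),
    isEdgeOrdering_cliqueOrder hl hmem, hτ.symm, fun ℓ hℓ => ?_, thueSeq_cliqueOrder_length hl hmem⟩
  have h := ncard_thueSeq_cliqueOrder_eq hl hmem (ℓ := ℓ) (by simp; omega)
  rw [Fintype.card_fin] at h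
  exact h
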